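/- In the general setting, assume 2·Σ_{k>⌊m/4⌋} α_k·Λ_{4k}/k < ∞. Then for any mapping A : F → V_m and all f ∈ F: ‖f − A f‖_{L_∞(μ)} ≤ 2·Σ_{k>⌊m/4⌋} α_k·Λ_{4k}/k + Λ_m·‖f − A f‖_{L₂(μ)}. -/

import Mathlib

/-!
Let `p n ∈ V_n` be the `L₂(μ)`-orthogonal projection of `f`. The increment
`p (2ʲ⁺¹m) - p (2ʲm)` is the projection of `f - p (2ʲm)` onto `V_{2ʲ⁺¹m}`, so its `L₂` norm is at
most `α_{2ʲm}` and its `L_∞` norm at most `α_{2ʲm} Λ_{2ʲ⁺¹m}`. Every `k` in the dyadic block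
`(2ʲm/2, 2ʲm]` has `α_k ≥ α_{2ʲm}`, `Λ_{4k} ≥ Λ_{2ʲ⁺¹m}` and `1/k ≥ 1/(2ʲm)`, so the sum of these
`L_∞` norms is at most `2 ∑_{k>⌊m/4⌋} α_k Λ_{4k}/k`. As this is finite and `Λ_n ≥ Λ_1 > 0`,
`α_{2ʲm} → 0`; hence the telescoping series converges to `f - p m` in measure, and `‖f - p m‖_∞`
obeys the same bound. Finally `p m - A f` is the projection of `f - A f` onto `V_m`, so
`‖p m - A f‖_∞ ≤ Λ_m ‖f - A f‖₂`.
-/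

open MeasureTheory ENNReal

/-- The (inverse) Christoffel function `Λ(V) = sup_{f ∈ V, f ≠ 0} ‖f‖_∞ / ‖f‖_2`. -/
noncomputable def christoffel {D : Type*} [MeasurableSpace D] (μ : Measure D)
    (V : Submodule ℂ (D → ℂ)) : ℝ≥0∞ :=
  ⨆ f ∈ V, eLpNorm f ⊤ μ / eLpNorm f 2 μ

/-- `V_n = span{b_1, …, b_n}`. -/
noncomputable def Vspan {D : Type*} (b : ℕ → D → ℂ) (n : ℕ) : Submodule ℂ (D → ℂ) :=
  Submodule.span ℂ (b '' Set.Icc 1 n)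

/-- `α_n = sup_{f ∈ F} inf_{g ∈ V_n} ‖f - g‖_{L₂(μ)}`, the error of best
`L₂(μ)`-approximation of `F` from `V_n` (equal to the projection error). -/
noncomputable def alphaSeq {D : Type*} [MeasurableSpace D] (μ : Measure D)
    (F : Set (D → ℂ)) (b : ℕ → D → ℂ) (n : ℕ) : ℝ≥0∞ :=
  ⨆ f ∈ F, ⨅ g ∈ Vspan b n, eLpNorm (fun x => f x - g x) 2 μ

open Filter Topology

lemma eLpNorm_top_sub_le_tsum_of_tendstoInMeasure {α E : Type*} [MeasurableSpace α]
    {μ : Measure α} [NormedAddCommGroup E] {h : ℕ → α → E} {f : α → E}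
    (hh : ∀ j, AEStronglyMeasurable (h j) μ) (hf : TendstoInMeasure μ h atTop f) :
    eLpNorm (f - h 0) ⊤ μ ≤ ∑' j, eLpNorm (h (j + 1) - h j) ⊤ μ := by
  obtain ⟨ns, -, hns⟩ := hf.exists_seq_tendsto_ae
  refine Lp.eLpNorm_le_of_ae_tendsto (f := fun i => h (ns i) - h 0) (.of_forall fun i => ?_)
    (fun i => (hh _).sub (hh 0)) (hns.mono fun x hx => hx.sub_const (h 0 x))
  rw [← Finset.sum_range_sub h]
  exact (eLpNorm_sum_le (fun j _ => (hh _).sub (hh j)) le_top).trans (ENNReal.sum_le_tsum _)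

section

variable {D : Type*}

lemma Vspan_mono (b : ℕ → D → ℂ) {n n' : ℕ} (h : n ≤ n') : Vspan b n ≤ Vspan b n' :=
  Submodule.span_mono (Set.image_mono (Set.Icc_subset_Icc_right h))

instance (b : ℕ → D → ℂ) (n : ℕ) : FiniteDimensional ℂ (Vspan b n) :=
  FiniteDimensional.span_of_finite ℂ ((Set.finite_Icc 1 n).image b)

variable [MeasurableSpace D] {μ : Measure D}

lemma alphaSeq_antitone (μ : Measure D) (F : Set (D → ℂ)) (b : ℕ → D → ℂ) :
    Antitone (alphaSeq μ F b) :=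
  fun _ _ h => iSup₂_mono fun _ _ => biInf_mono fun _ hg => Vspan_mono b h hg

lemma eLpNorm_sub_le_alphaSeq {F : Set (D → ℂ)} {b : ℕ → D → ℂ} {n : ℕ} {f p : D → ℂ}
    (hf : f ∈ F) (hp : ∀ g ∈ Vspan b n, eLpNorm (f - p) 2 μ ≤ eLpNorm (f - g) 2 μ) :
    eLpNorm (f - p) 2 μ ≤ alphaSeq μ F b n :=
  (le_iInf₂ hp).trans
    (le_iSup₂ (f := fun f (_ : f ∈ F) => ⨅ g ∈ Vspan b n, eLpNorm (f - g) 2 μ) f hf)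

lemma christoffel_mono {V W : Submodule ℂ (D → ℂ)} (h : V ≤ W) :
    christoffel μ V ≤ christoffel μ W :=
  biSup_mono fun _ hg => h hg

lemma eLpNorm_top_le_christoffel_mul {V : Submodule ℂ (D → ℂ)} {g : D → ℂ} (hgV : g ∈ V)
    (hg : MemLp g 2 μ) : eLpNorm g ⊤ μ ≤ christoffel μ V * eLpNorm g 2 μ := by
  by_cases h0 : eLpNorm g 2 μ = 0
  · rw [eLpNorm_congr_ae ((eLpNorm_eq_zero_iff hg.1 two_ne_zero).1 h0), eLpNorm_zero]
    exact zero_le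
  · exact (ENNReal.div_le_iff h0 hg.2.ne).1
      (le_iSup₂ (f := fun g (_ : g ∈ V) => eLpNorm g ⊤ μ / eLpNorm g 2 μ) g hgV)

lemma eLpNorm_top_sub_le_christoffel_mul {V : Submodule ℂ (D → ℂ)} (hV : ∀ g ∈ V, MemLp g 2 μ)
    {f p g : D → ℂ} (hp : p ∈ V) (hg : g ∈ V) (hpg : eLpNorm (p - g) 2 μ ≤ eLpNorm (f - g) 2 μ) :
    eLpNorm (p - g) ⊤ μ ≤ christoffel μ V * eLpNorm (f - g) 2 μ :=
  have hmem := sub_mem hp hg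
  (eLpNorm_top_le_christoffel_mul hmem (hV _ hmem)).trans (by gcongr)

lemma christoffel_pos {V : Submodule ℂ (D → ℂ)} {g : D → ℂ} (hgV : g ∈ V) (hg : MemLp g 2 μ)
    (hg0 : ¬g =ᵐ[μ] 0) : 0 < christoffel μ V := by
  have htop : eLpNorm g ⊤ μ ≠ 0 := fun h => hg0 ((eLpNorm_eq_zero_iff hg.1 top_ne_zero).1 h)
  exact (ENNReal.div_pos htop hg.2.ne).trans_le
    (le_iSup₂ (f := fun g (_ : g ∈ V) => eLpNorm g ⊤ μ / eLpNorm g 2 μ) g hgV)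

lemma memLp_two_of_integral_conj_mul_self_ne_zero {g : D → ℂ} (hg : AEStronglyMeasurable g μ)
    (h : ∫ x, (starRingEnd ℂ) (g x) * g x ∂μ ≠ 0) : MemLp g 2 μ := by
  refine (memLp_two_iff_integrable_sq_norm hg).2 ?_
  refine (Integrable.re (Integrable.of_integral_ne_zero h)).congr (.of_forall fun x => ?_)
  exact_mod_cast congrArg Complex.re (Complex.conj_mul' (g x))

lemma not_ae_eq_zero_of_integral_conj_mul_self_ne_zero {g : D → ℂ}
    (h : ∫ x, (starRingEnd ℂ) (g x) * g x ∂μ ≠ 0) : ¬g =ᵐ[μ] 0 := fun hg0 =>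
  h (integral_eq_zero_of_ae (hg0.mono fun x hx => by simp [hx]))

lemma memLp_of_mem_span {p : ℝ≥0∞} {s : Set (D → ℂ)} (hs : ∀ g ∈ s, MemLp g p μ) {g : D → ℂ}
    (hg : g ∈ Submodule.span ℂ s) : MemLp g p μ := by
  induction hg using Submodule.span_induction with
  | mem x hx => exact hs x hx
  | zero => exact .zero
  | add x y _ _ hx hy => exact hx.add hy
  | smul a x _ hx => exact hx.const_smul a

lemma memLp_of_mem_Vspan {p : ℝ≥0∞} {b : ℕ → D → ℂ} (hb : ∀ k, 1 ≤ k → MemLp (b k) p μ) {n : ℕ}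
    {g : D → ℂ} (hg : g ∈ Vspan b n) : MemLp g p μ :=
  memLp_of_mem_span (by rintro _ ⟨k, hk, rfl⟩; exact hb k hk.1) hg

lemma christoffel_Vspan_pos {b : ℕ → D → ℂ} (hb : AEStronglyMeasurable (b 1) μ)
    (hb0 : ∫ x, (starRingEnd ℂ) (b 1 x) * b 1 x ∂μ ≠ 0) {n : ℕ} (hn : 1 ≤ n) :
    0 < christoffel μ (Vspan b n) :=
  christoffel_pos (Submodule.subset_span ⟨1, ⟨le_rfl, hn⟩, rfl⟩)
    (memLp_two_of_integral_conj_mul_self_ne_zero hb hb0)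
    (not_ae_eq_zero_of_integral_conj_mul_self_ne_zero hb0)

lemma exists_mem_eLpNorm_two_sub_le (V : Submodule ℂ (D → ℂ)) [FiniteDimensional ℂ V]
    (hV : ∀ g ∈ V, MemLp g 2 μ) {f : D → ℂ} (hf : MemLp f 2 μ) :
    ∃ p ∈ V, ∀ g ∈ V, eLpNorm (f - p) 2 μ ≤ eLpNorm (f - g) 2 μ ∧
      eLpNorm (p - g) 2 μ ≤ eLpNorm (f - g) 2 μ := by
  let T : V →ₗ[ℂ] Lp ℂ 2 μ :=
    { toFun := fun g => (hV g g.2).toLp g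
      map_add' := fun g g' => MemLp.toLp_add (hV g g.2) (hV g' g'.2)
      map_smul' := fun c g => MemLp.toLp_const_smul c (hV g g.2) }
  let K := LinearMap.range T
  have : CompleteSpace K := FiniteDimensional.complete ℂ K
  obtain ⟨p, hp⟩ := LinearMap.mem_range.1 (K.starProjection_apply_mem (hf.toLp f))
  refine ⟨p, p.2, fun g hg => ?_⟩
  have hgK : T ⟨g, hg⟩ ∈ K := LinearMap.mem_range_self T _
  -- Both differences are orthogonal projections of `f - g`, onto `Kᗮ` and onto `K` respectively.
  have hfp : hf.toLp f - T p = Kᗮ.starProjection (hf.toLp f - T ⟨g, hg⟩) := by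
    rw [map_sub, Submodule.starProjection_orthogonal_val, hp,
      (Submodule.starProjection_apply_eq_zero_iff Kᗮ).2 (K.le_orthogonal_orthogonal hgK), sub_zero]
  have hpg : T p - T ⟨g, hg⟩ = K.starProjection (hf.toLp f - T ⟨g, hg⟩) := by
    rw [map_sub, hp, Submodule.starProjection_eq_self_iff.2 hgK]
  have henorm : ∀ {u v : D → ℂ} (hu : MemLp u 2 μ) (hv : MemLp v 2 μ),
      eLpNorm (u - v) 2 μ = ‖hu.toLp u - hv.toLp v‖ₑ := fun hu hv => by
    rw [← MemLp.toLp_sub, Lp.enorm_toLp]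
  rw [henorm hf (hV p p.2), henorm (hV p p.2) (hV g hg), henorm hf (hV g hg)]
  exact ⟨enorm_le_iff_norm_le.2 (hfp ▸ Kᗮ.norm_starProjection_apply_le _),
    enorm_le_iff_norm_le.2 (hpg ▸ K.norm_starProjection_apply_le _)⟩

lemma eLpNorm_top_sub_le_tsum_christoffel_mul {V : ℕ → Submodule ℂ (D → ℂ)} (hV : Monotone V)
    (hVL2 : ∀ n, ∀ g ∈ V n, MemLp g 2 μ) {f : D → ℂ} (hf : MemLp f 2 μ) {p : ℕ → D → ℂ}
    (hpV : ∀ n, p n ∈ V n) (hp : ∀ n, ∀ g ∈ V n, eLpNorm (p n - g) 2 μ ≤ eLpNorm (f - g) 2 μ)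
    (hlim : Tendsto (fun n => eLpNorm (f - p n) 2 μ) atTop (𝓝 0)) :
    eLpNorm (f - p 0) ⊤ μ ≤ ∑' n, christoffel μ (V (n + 1)) * eLpNorm (f - p n) 2 μ := by
  have hstep : ∀ n, eLpNorm (p (n + 1) - p n) ⊤ μ ≤
      christoffel μ (V (n + 1)) * eLpNorm (f - p n) 2 μ := fun n =>
    have hpn := hV n.le_succ (hpV n)
    eLpNorm_top_sub_le_christoffel_mul (hVL2 _) (hpV _) hpn (hp _ _ hpn)
  have hconv : TendstoInMeasure μ p atTop f :=
    tendstoInMeasure_of_tendsto_eLpNorm two_ne_zero (fun n => (hVL2 n _ (hpV n)).1) hf.1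
      (by simpa only [eLpNorm_sub_comm] using hlim)
  exact (eLpNorm_top_sub_le_tsum_of_tendstoInMeasure (fun n => (hVL2 n _ (hpV n)).1) hconv).trans
    (ENNReal.tsum_le_tsum hstep)

end

lemma le_two_mul_sum_Ioc_half {t : ℕ → ℝ≥0∞} {n : ℕ} (hn : n ≠ 0) {c : ℝ≥0∞}
    (h : ∀ k ∈ Finset.Ioc (n / 2) n, c / n ≤ t k) :
    c ≤ 2 * ∑ k ∈ Finset.Ioc (n / 2) n, t k :=
  calc c = n * (c / n) := (ENNReal.mul_div_cancel (by simpa) (ENNReal.natCast_ne_top n)).symm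
    _ ≤ 2 * ((n - n / 2 : ℕ) * (c / n)) := by
      rw [← mul_assoc]
      gcongr
      exact_mod_cast (by omega : n ≤ 2 * (n - n / 2))
    _ ≤ 2 * ∑ k ∈ Finset.Ioc (n / 2) n, t k := by
      gcongr
      simpa [Nat.card_Ioc] using Finset.card_nsmul_le_sum _ _ _ h

lemma disjoint_Ioc_two_pow_mul (m : ℕ) {i j : ℕ} (hij : i ≠ j) :
    Disjoint (Finset.Ioc (2 ^ i * m / 2) (2 ^ i * m)) (Finset.Ioc (2 ^ j * m / 2) (2 ^ j * m)) := by
  wlog hlt : i < j generalizing i j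
  · exact (this hij.symm (by omega)).symm
  have hle : 2 ^ i * m ≤ 2 ^ j * m / 2 := by
    rw [Nat.le_div_iff_mul_le two_pos, mul_right_comm, ← pow_succ]
    exact Nat.mul_le_mul_right m (Nat.pow_le_pow_right two_pos hlt)
  rw [Finset.disjoint_left]
  intro k hki hkj
  simp only [Finset.mem_Ioc] at hki hkj
  omega

lemma tsum_sum_Ioc_two_pow_mul_le (t : ℕ → ℝ≥0∞) (m : ℕ) :
    ∑' j, ∑ k ∈ Finset.Ioc (2 ^ j * m / 2) (2 ^ j * m), t k ≤ ∑' k, t k := by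
  rw [ENNReal.tsum_eq_iSup_nat]
  refine iSup_le fun J => ?_
  rw [← Finset.sum_biUnion fun i _ j _ hij => disjoint_Ioc_two_pow_mul m hij]
  exact ENNReal.sum_le_tsum _

lemma tsum_mul_two_pow_mul_le {a L : ℕ → ℝ≥0∞} (ha : Antitone a) (hL : Monotone L) {m : ℕ}
    (hm : 1 ≤ m) :
    ∑' j, a (2 ^ j * m) * L (2 ^ (j + 1) * m) ≤
      2 * ∑' k : ℕ, if m / 4 < k then a k * L (4 * k) / k else 0 := by
  set t : ℕ → ℝ≥0∞ := fun k => if m / 4 < k then a k * L (4 * k) / k else 0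
  have hblock : ∀ j, ∀ k ∈ Finset.Ioc (2 ^ j * m / 2) (2 ^ j * m),
      a (2 ^ j * m) * L (2 ^ (j + 1) * m) / (2 ^ j * m : ℕ) ≤ t k := by
    intro j k hk
    rw [Finset.mem_Ioc] at hk
    have hmn : m ≤ 2 ^ j * m := Nat.le_mul_of_pos_left m (by positivity)
    have h2n : 2 ^ (j + 1) * m = 2 * (2 ^ j * m) := by ring
    simp only [t, if_pos (by omega : m / 4 < k)]
    gcongr
    · exact ha hk.2
    · exact hL (by omega)
    · exact hk.2
  calc ∑' j, a (2 ^ j * m) * L (2 ^ (j + 1) * m)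
      ≤ ∑' j, 2 * ∑ k ∈ Finset.Ioc (2 ^ j * m / 2) (2 ^ j * m), t k :=
        ENNReal.tsum_le_tsum fun j => le_two_mul_sum_Ioc_half (by positivity) (hblock j)
    _ = 2 * ∑' j, ∑ k ∈ Finset.Ioc (2 ^ j * m / 2) (2 ^ j * m), t k := ENNReal.tsum_mul_left
    _ ≤ 2 * ∑' k, t k := mul_le_mul_right (tsum_sum_Ioc_two_pow_mul_le t m) 2

lemma tendsto_atTop_zero_of_tsum_mul_ne_top {a L : ℕ → ℝ≥0∞} {c : ℝ≥0∞} (hc : c ≠ 0)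
    (hL : ∀ j, c ≤ L j) (h : ∑' j, a j * L j ≠ ⊤) : Tendsto a atTop (𝓝 0) := by
  set c' := min c 1
  have hc'0 : c' ≠ 0 := by simp [c', hc]
  have hc'top : c' ≠ ⊤ := ne_top_of_le_ne_top one_ne_top (min_le_right _ _)
  have hac : Tendsto (fun j => a j * c') atTop (𝓝 0) :=
    tendsto_of_tendsto_of_tendsto_of_le_of_le tendsto_const_nhds
      (ENNReal.tendsto_atTop_zero_of_tsum_ne_top h) (fun _ => zero_le)
      fun j => mul_le_mul_right ((min_le_left _ _).trans (hL j)) _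
  simpa [ENNReal.mul_div_cancel_right hc'0 hc'top] using ENNReal.Tendsto.div_const hac (Or.inr hc'0)

theorem stmt5_general {D : Type*} [MeasurableSpace D] (μ : Measure D)
    (bb : ℕ → D → ℂ)
    (hmeas : ∀ k, Measurable (bb k))
    (hON : ∀ j k, 1 ≤ j → 1 ≤ k →
      ∫ x, (starRingEnd ℂ) (bb j x) * bb k x ∂μ = if j = k then 1 else 0)
    (F : Set (D → ℂ))
    (hFL2 : ∀ f ∈ F, MemLp f 2 μ)
    (m : ℕ) (hm : 1 ≤ m)
    (hfin : (∑' k : ℕ, if m / 4 < k then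
        alphaSeq μ F bb k * christoffel μ (Vspan bb (4 * k)) / (k : ℝ≥0∞) else 0) ≠ ⊤)
    (A : (D → ℂ) → D → ℂ) (hA : ∀ f ∈ F, A f ∈ Vspan bb m)
    (f : D → ℂ) (hf : f ∈ F) :
    eLpNorm (fun x => f x - A f x) ⊤ μ ≤
      2 * (∑' k : ℕ, if m / 4 < k then
          alphaSeq μ F bb k * christoffel μ (Vspan bb (4 * k)) / (k : ℝ≥0∞) else 0) +
        christoffel μ (Vspan bb m) * eLpNorm (fun x => f x - A f x) 2 μ := by
  have hnorm : ∀ k, 1 ≤ k → ∫ x, (starRingEnd ℂ) (bb k x) * bb k x ∂μ ≠ 0 :=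
    fun k hk => by simp [hON k k hk hk]
  have hV : ∀ n, ∀ g ∈ Vspan bb n, MemLp g 2 μ := fun n g => memLp_of_mem_Vspan fun k hk =>
    memLp_two_of_integral_conj_mul_self_ne_zero (hmeas k).aestronglyMeasurable (hnorm k hk)
  choose p hpV hp using fun n => exists_mem_eLpNorm_two_sub_le (Vspan bb n) (hV n) (hFL2 f hf)
  have herr : ∀ n, eLpNorm (f - p n) 2 μ ≤ alphaSeq μ F bb n :=
    fun n => eLpNorm_sub_le_alphaSeq hf fun g hg => (hp n g hg).1
  have hΛ : Monotone fun n => christoffel μ (Vspan bb n) :=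
    fun _ _ h => christoffel_mono (Vspan_mono bb h)
  set S := ∑' k : ℕ, if m / 4 < k then
    alphaSeq μ F bb k * christoffel μ (Vspan bb (4 * k)) / (k : ℝ≥0∞) else 0
  have hsum : ∑' j, alphaSeq μ F bb (2 ^ j * m) * christoffel μ (Vspan bb (2 ^ (j + 1) * m)) ≤
      2 * S := tsum_mul_two_pow_mul_le (alphaSeq_antitone μ F bb) hΛ hm
  have hα : Tendsto (fun j => alphaSeq μ F bb (2 ^ j * m)) atTop (𝓝 0) :=
    tendsto_atTop_zero_of_tsum_mul_ne_top
      (christoffel_Vspan_pos (hmeas 1).aestronglyMeasurable (hnorm 1 le_rfl) le_rfl).ne'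
      (fun j => hΛ (Nat.one_le_iff_ne_zero.2 (by positivity)))
      (ne_top_of_le_ne_top (by finiteness) hsum)
  have hfirst : eLpNorm (f - p m) ⊤ μ ≤ 2 * S := by
    have hdyadic := eLpNorm_top_sub_le_tsum_christoffel_mul
      (fun i j h => Vspan_mono bb (Nat.mul_le_mul_right m (Nat.pow_le_pow_right two_pos h)))
      (fun _ => hV _) (hFL2 f hf) (fun _ => hpV _) (fun _ => fun g hg => (hp _ g hg).2)
      (tendsto_of_tendsto_of_tendsto_of_le_of_le tendsto_const_nhds hα (fun _ => zero_le)
        fun _ => herr _)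
    rw [pow_zero, one_mul] at hdyadic
    refine hdyadic.trans (le_trans (ENNReal.tsum_le_tsum fun j => ?_) hsum)
    rw [mul_comm]
    gcongr
    exact herr _
  have hsecond : eLpNorm (p m - A f) ⊤ μ ≤ christoffel μ (Vspan bb m) * eLpNorm (f - A f) 2 μ :=
    eLpNorm_top_sub_le_christoffel_mul (hV m) (hpV m) (hA f hf) (hp m _ (hA f hf)).2
  calc eLpNorm (fun x => f x - A f x) ⊤ μ = eLpNorm ((f - p m) + (p m - A f)) ⊤ μ := by
        rw [sub_add_sub_cancel]; rfl
    _ ≤ 2 * S + christoffel μ (Vspan bb m) * eLpNorm (fun x => f x - A f x) 2 μ :=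
        (eLpNorm_add_le ((hFL2 f hf).1.sub (hV _ _ (hpV _)).1)
          ((hV _ _ (hpV _)).1.sub (hV _ _ (hA f hf)).1) le_top).trans (add_le_add hfirst hsecond)

/-- **Lemma (lifting `L₂` bounds to `L_∞`, general classes).**
In the general setting, if `2 ∑_{k>⌊m/4⌋} α_k Λ_{4k} / k < ∞`, then for any mapping
`A : F → V_m` and all `f ∈ F`:
`‖f - A f‖_∞ ≤ 2 ∑_{k>⌊m/4⌋} α_k Λ_{4k}/k + Λ_m ‖f - A f‖₂`. -/
theorem stmt5 {D : Type*} [MeasurableSpace D] (μ : Measure D)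
    (bb : ℕ → D → ℂ)
    (hmeas : ∀ k, Measurable (bb k))
    (hbdd : ∀ k, ∃ M : ℝ, ∀ x, ‖bb k x‖ ≤ M)
    (hON : ∀ j k, 1 ≤ j → 1 ≤ k →
      ∫ x, (starRingEnd ℂ) (bb j x) * bb k x ∂μ = if j = k then 1 else 0)
    (F : Set (D → ℂ))
    (hFbdd : ∀ f ∈ F, ∃ M : ℝ, ∀ x, ‖f x‖ ≤ M)
    (hFmeas : ∀ f ∈ F, Measurable f)
    (hFL2 : ∀ f ∈ F, MemLp f 2 μ)
    (m : ℕ) (hm : 1 ≤ m)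
    (hfin : (∑' k : ℕ, if m / 4 < k then
        alphaSeq μ F bb k * christoffel μ (Vspan bb (4 * k)) / (k : ℝ≥0∞) else 0) ≠ ⊤)
    (A : (D → ℂ) → D → ℂ) (hA : ∀ f ∈ F, A f ∈ Vspan bb m)
    (f : D → ℂ) (hf : f ∈ F) :
    eLpNorm (fun x => f x - A f x) ⊤ μ ≤
      2 * (∑' k : ℕ, if m / 4 < k then
          alphaSeq μ F bb k * christoffel μ (Vspan bb (4 * k)) / (k : ℝ≥0∞) else 0) +
        christoffel μ (Vspan bb m) * eLpNorm (fun x => f x - A f x) 2 μ :=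
  stmt5_general μ bb hmeas hON F hFL2 m hm hfin A hA f hf
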